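/- arXiv:hep-th/0501097 — 2 statements merged into one kernel-verified Lean document; each statement's English description precedes it below -/
import Mathlib

section
/- Let ω be an invertible antisymmetric n×n matrix with inverse W, let N be an n×m matrix with Δ = Nᵀ W N invertible. Then the Dirac bivector D = W − W N Δ⁻¹ Nᵀ W is antisymmetric and has rank exactly n − m. -/
/-!
Inverses and congruences `Bᵀ A B` of skew matrices are skew, so `W`, `Δ` and `Δ⁻¹` are skew and
the antisymmetry of `D` is a computation. For the rank, `C = Δ⁻¹ Nᵀ W` satisfies `C N = 1`, so
`P = N C` is an idempotent of rank `m` and `D = W (1 - P)`; as `W` is invertible,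
`rank D = rank (1 - P) = n - rank P = n - m`.
-/

open Matrix

namespace Matrix

variable {K ι κ : Type*} [Field K] [Fintype ι]

protected theorem inv_neg [DecidableEq ι] (A : Matrix ι ι K) : (-A)⁻¹ = -A⁻¹ := by
  by_cases hA : IsUnit A.det
  · exact inv_eq_right_inv (by rw [neg_mul, mul_neg, neg_neg, mul_nonsing_inv A hA])
  · have hnA : ¬IsUnit (-A).det := by simpa [det_neg, isUnit_iff_ne_zero] using hA
    rw [nonsing_inv_apply_not_isUnit A hA, nonsing_inv_apply_not_isUnit _ hnA, neg_zero]

theorem transpose_nonsing_inv_of_transpose_eq_neg [DecidableEq ι] {A : Matrix ι ι K}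
    (hA : Aᵀ = -A) : A⁻¹ᵀ = -A⁻¹ := by
  rw [transpose_nonsing_inv, hA, Matrix.inv_neg]

theorem transpose_mul_mul_self_of_transpose_eq_neg {A : Matrix ι ι K} (hA : Aᵀ = -A)
    (B : Matrix ι κ K) : (Bᵀ * A * B)ᵀ = -(Bᵀ * A * B) := by
  rw [transpose_mul, transpose_mul, transpose_transpose, hA, Matrix.neg_mul, Matrix.mul_neg,
    Matrix.mul_assoc]

theorem rank_add_rank_one_sub_of_isIdempotentElem [DecidableEq ι] {P : Matrix ι ι K}
    (hP : IsIdempotentElem P) : P.rank + (1 - P).rank = Fintype.card ι := by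
  have hP' : IsIdempotentElem (toLin' P) := hP.map (toLinAlgEquiv' (R := K))
  rw [rank, rank, ← toLin'_apply', ← toLin'_apply', map_sub, toLin'_one,
    ← LinearMap.IsIdempotentElem.ker_eq_range hP', LinearMap.finrank_range_add_finrank_ker,
    Module.finrank_fintype_fun_eq_card]

variable [Fintype κ]

theorem rank_eq_card_of_mul_eq_one [DecidableEq κ] {N : Matrix ι κ K} {C : Matrix κ ι K}
    (h : C * N = 1) : N.rank = Fintype.card κ :=
  le_antisymm N.rank_le_card_width <| by simpa [h] using rank_mul_le_right C N

theorem rank_one_sub_mul_of_mul_eq_one [DecidableEq ι] [DecidableEq κ] {N : Matrix ι κ K}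
    {C : Matrix κ ι K} (h : C * N = 1) :
    (1 - N * C).rank = Fintype.card ι - Fintype.card κ := by
  have hidem : IsIdempotentElem (N * C) := by
    rw [IsIdempotentElem, Matrix.mul_assoc, ← Matrix.mul_assoc C, h, Matrix.one_mul]
  have hrank : (N * C).rank = Fintype.card κ := by
    refine le_antisymm ((rank_mul_le_left N C).trans N.rank_le_card_width) ?_
    calc Fintype.card κ = (N * C * N).rank := by
          rw [Matrix.mul_assoc, h, Matrix.mul_one, rank_eq_card_of_mul_eq_one h]
      _ ≤ (N * C).rank := rank_mul_le_left _ _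
  have := rank_add_rank_one_sub_of_isIdempotentElem hidem
  omega

end Matrix

/-- The Dirac bivector D = W − W N Δ⁻¹ Nᵀ W is antisymmetric and has rank n − m. -/
theorem dirac_bivector_antisymm_rank {K : Type*} [Field K] {n m : ℕ}
    (ω : Matrix (Fin n) (Fin n) K) (N : Matrix (Fin n) (Fin m) K)
    (hω : IsUnit ω) (hskew : ωᵀ = -ω)
    (W : Matrix (Fin n) (Fin n) K) (hW : W = ω⁻¹)
    (Δ : Matrix (Fin m) (Fin m) K) (hΔdef : Δ = Nᵀ * W * N) (hΔ : IsUnit Δ) :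
    (W - W * N * Δ⁻¹ * Nᵀ * W)ᵀ = -(W - W * N * Δ⁻¹ * Nᵀ * W) ∧
      (W - W * N * Δ⁻¹ * Nᵀ * W).rank = n - m := by
  have hWskew : Wᵀ = -W := hW ▸ transpose_nonsing_inv_of_transpose_eq_neg hskew
  have hΔskew : Δ⁻¹ᵀ = -Δ⁻¹ := transpose_nonsing_inv_of_transpose_eq_neg <|
    hΔdef ▸ transpose_mul_mul_self_of_transpose_eq_neg hWskew N
  have hC : Δ⁻¹ * Nᵀ * W * N = 1 := by
    rw [Matrix.mul_assoc, Matrix.mul_assoc, ← Matrix.mul_assoc Nᵀ, ← hΔdef,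
      nonsing_inv_mul Δ ((isUnit_iff_isUnit_det Δ).mp hΔ)]
  have hWdet : IsUnit W.det := hW ▸ isUnit_nonsing_inv_det ω ((isUnit_iff_isUnit_det ω).mp hω)
  have hfactor : W - W * N * Δ⁻¹ * Nᵀ * W = W * (1 - N * (Δ⁻¹ * Nᵀ * W)) := by
    simp only [Matrix.mul_sub, Matrix.mul_one, Matrix.mul_assoc]
  refine ⟨?_, ?_⟩
  · simp [transpose_mul, hWskew, hΔskew, Matrix.mul_assoc, neg_add_eq_sub]
  · rw [hfactor, rank_mul_eq_right_of_isUnit_det W _ hWdet, rank_one_sub_mul_of_mul_eq_one hC,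
      Fintype.card_fin, Fintype.card_fin]
end

section
/- Let A, δ, δ* be as above. If B ∈ A satisfies δB = 0 and B|_{C=Y=0} = 0, then x := δ* B satisfies δ x = B. Moreover x is the unique solution of δ x = B satisfying δ* x = 0 and x|_{C=Y=0} = 0. -/
/-! The free graded-commutative algebra on `n` even generators `Y^A` and `n` odd
generators `C^A` over `R`, realized as finitely supported functions on monomials:
a monomial is a pair `(k, s)` of a multi-exponent `k` for the `Y`'s and a subset
`s : Finset (Fin n)` recording the (increasingly ordered) product of `C`'s. -/
abbrev FreeSCA (n : ℕ) (R : Type*) [CommRing R] := ((Fin n →₀ ℕ) × Finset (Fin n)) →₀ R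

variable {n : ℕ} {R : Type*} [CommRing R]

/-- Koszul sign of moving `C^A` past the generators of `s` smaller than `A`. -/
def koszulSign (s : Finset (Fin n)) (A : Fin n) : ℤ := (-1) ^ (s.filter (fun B => B < A)).card

/-- Total degree in the `Y` variables. -/
def degY (k : Fin n →₀ ℕ) : ℕ := k.sum fun _ v => v

/-- The Koszul differential δ = Σ_A C^A ∂/∂Y^A. -/
noncomputable def delta (f : FreeSCA n R) : FreeSCA n R :=
  f.sum fun ks r => ∑ A : Fin n,
    if A ∈ ks.2 then 0 else
      Finsupp.single (ks.1 - Finsupp.single A 1, insert A ks.2)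
        (((ks.1 A : ℤ) * koszulSign ks.2 A) • r)

/-- The contracting homotopy δ* = (1/(p+q)) Σ_A Y^A ∂/∂C^A on bidegree (p,q),
with δ* = 0 on bidegree (0,0). -/
noncomputable def deltaStar [Algebra ℚ R] (f : FreeSCA n R) : FreeSCA n R :=
  f.sum fun ks r => ∑ A ∈ ks.2,
    Finsupp.single (ks.1 + Finsupp.single A 1, ks.2.erase A)
      (((((ks.2.card + degY ks.1 : ℕ) : ℚ)⁻¹ * (koszulSign ks.2 A : ℚ)) • r))

/-- Projection onto the component of bidegree (0,0), i.e. evaluation at C = Y = 0. -/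
noncomputable def piZero (f : FreeSCA n R) : FreeSCA n R :=
  Finsupp.single (0, ∅) (f (0, ∅))

/-! The contracting homotopy identity `δ δ* + δ* δ + π₀ = id` gives everything: applied to `B`
it yields `δ (δ* B) = B`, and applied to a solution `x` with `δ* x = 0` and `π₀ x = 0` it yields
`x = δ* (δ x) = δ* B`. Both sides of the identity are additive, so it suffices to check it on a
monomial `Y^k C^s` of total degree `N = |k| + |s| > 0`. There the terms of `δ δ*` and `δ* δ` that
return to `Y^k C^s` add up to `(∑_{A ∈ s} (k_A + 1) + ∑_{A ∉ s} k_A) / N = 1`, and the remaining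
terms, which move one `C^A` (`A ∈ s`) to a `C^B` (`B ∉ s`), cancel in pairs by the Koszul signs. -/

open Finsupp

lemma delta_add (f g : FreeSCA n R) : delta (f + g) = delta f + delta g :=
  Finsupp.sum_add_index' (fun _ => by simp) fun _ _ _ => by
    simp only [smul_add, single_add, ← Finset.sum_add_distrib]
    refine Finset.sum_congr rfl fun _ _ => ?_
    split_ifs <;> simp

lemma deltaStar_add [Algebra ℚ R] (f g : FreeSCA n R) :
    deltaStar (f + g) = deltaStar f + deltaStar g :=
  Finsupp.sum_add_index' (fun _ => by simp) fun _ _ _ => by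
    simp only [smul_add, single_add, Finset.sum_add_distrib]

noncomputable def deltaHom : FreeSCA n R →+ FreeSCA n R := AddMonoidHom.mk' delta delta_add

noncomputable def deltaStarHom [Algebra ℚ R] : FreeSCA n R →+ FreeSCA n R :=
  AddMonoidHom.mk' deltaStar deltaStar_add

noncomputable def piZeroHom : FreeSCA n R →+ FreeSCA n R :=
  AddMonoidHom.mk' piZero fun f g => by simp [piZero, single_add]

lemma delta_zero : delta (0 : FreeSCA n R) = 0 := sum_zero_index

lemma deltaStar_zero [Algebra ℚ R] : deltaStar (0 : FreeSCA n R) = 0 := sum_zero_index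

lemma piZero_eq_zero {f : FreeSCA n R} (hf : f (0, ∅) = 0) : piZero f = 0 := by
  rw [piZero, hf, single_zero]

lemma delta_sum {ι : Type*} (t : Finset ι) (g : ι → FreeSCA n R) :
    delta (∑ i ∈ t, g i) = ∑ i ∈ t, delta (g i) :=
  map_sum deltaHom g t

lemma deltaStar_sum [Algebra ℚ R] {ι : Type*} (t : Finset ι) (g : ι → FreeSCA n R) :
    deltaStar (∑ i ∈ t, g i) = ∑ i ∈ t, deltaStar (g i) :=
  map_sum deltaStarHom g t

lemma degY_eq_degree (k : Fin n →₀ ℕ) : degY k = k.degree := rfl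

lemma degY_sub_single_add_one {k : Fin n →₀ ℕ} {A : Fin n} (hk : k A ≠ 0) :
    degY (k - single A 1) + 1 = degY k := by
  conv_rhs => rw [← tsub_add_cancel_of_le (single_le_iff.mpr (Nat.one_le_iff_ne_zero.mpr hk))]
  simp only [degY_eq_degree, map_add, Finsupp.degree_single]

lemma eq_zero_of_degY_eq_zero {k : Fin n →₀ ℕ} (h : degY k = 0) : k = 0 :=
  (Finsupp.degree_eq_zero_iff k).mp h

lemma koszulSign_mul_self (s : Finset (Fin n)) (A : Fin n) :
    koszulSign s A * koszulSign s A = 1 := by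
  rw [koszulSign, ← pow_add, Even.neg_one_pow ⟨_, rfl⟩]

lemma koszulSign_erase_of_not_lt (s : Finset (Fin n)) {A B : Fin n} (h : ¬A < B) :
    koszulSign (s.erase A) B = koszulSign s B := by
  rw [koszulSign, Finset.filter_erase, Finset.erase_eq_of_notMem (by simp [h]), koszulSign]

lemma koszulSign_erase_of_lt {s : Finset (Fin n)} {A B : Fin n} (hA : A ∈ s) (h : A < B) :
    koszulSign (s.erase A) B = -koszulSign s B := by
  rw [koszulSign, koszulSign, Finset.filter_erase,
    ← Finset.card_erase_add_one (Finset.mem_filter.mpr ⟨hA, h⟩), pow_succ, mul_neg_one, neg_neg]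

lemma koszulSign_insert_of_not_lt (s : Finset (Fin n)) {A B : Fin n} (h : ¬B < A) :
    koszulSign (insert B s) A = koszulSign s A := by
  rw [koszulSign, Finset.filter_insert, if_neg h, koszulSign]

lemma koszulSign_insert_of_lt {s : Finset (Fin n)} {A B : Fin n} (hB : B ∉ s) (h : B < A) :
    koszulSign (insert B s) A = -koszulSign s A := by
  rw [koszulSign, koszulSign, Finset.filter_insert, if_pos h,
    Finset.card_insert_of_notMem (by simp [hB]), pow_succ, mul_neg_one]

lemma koszulSign_erase_mul_koszulSign {s : Finset (Fin n)} {A B : Fin n} (hA : A ∈ s)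
    (hB : B ∉ s) :
    koszulSign (s.erase A) B * koszulSign s A = -(koszulSign (insert B s) A * koszulSign s B) := by
  have hAB : A ≠ B := fun h => hB (h ▸ hA)
  rcases hAB.lt_or_gt with h | h
  · rw [koszulSign_erase_of_lt hA h, koszulSign_insert_of_not_lt s (asymm h)]; ring
  · rw [koszulSign_erase_of_not_lt s (asymm h), koszulSign_insert_of_lt hB h]; ring

/-- The factor `k B` makes this hold also when `k - single B 1` truncates. -/
lemma natCast_mul_inv_card_insert_add_degY_sub_single {k : Fin n →₀ ℕ} {s : Finset (Fin n)}
    {B : Fin n} (hB : B ∉ s) :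
    (k B : ℚ) * (((insert B s).card + degY (k - single B 1) : ℕ) : ℚ)⁻¹ =
      (k B : ℚ) * ((s.card + degY k : ℕ) : ℚ)⁻¹ := by
  by_cases hk : k B = 0
  · simp [hk]
  · have hdeg := degY_sub_single_add_one hk
    rw [Finset.card_insert_of_notMem hB, show s.card + 1 + degY (k - single B 1) =
      s.card + degY k by omega]

lemma add_single_tsub_single_of_ne {α : Type*} (k : α →₀ ℕ) {A B : α} (h : A ≠ B) :
    k + single A 1 - single B 1 = k - single B 1 + single A 1 := by
  classical
  ext i
  simp only [tsub_apply, Finsupp.add_apply, single_apply]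
  split_ifs with h1 h2
  · exact absurd (h1.trans h2.symm) h
  all_goals omega

lemma delta_single (k : Fin n →₀ ℕ) (s : Finset (Fin n)) (r : R) :
    delta (single (k, s) r) =
      ∑ A ∈ sᶜ, single (k - single A 1, insert A s) (((k A : ℤ) * koszulSign s A) • r) := by
  rw [delta, Finsupp.sum_single_index (by simp), Finset.sum_ite, Finset.sum_const_zero, zero_add]
  congr 1
  ext; simp

lemma deltaStar_single [Algebra ℚ R] (k : Fin n →₀ ℕ) (s : Finset (Fin n)) (r : R) :
    deltaStar (single (k, s) r) = ∑ A ∈ s, single (k + single A 1, s.erase A)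
      (((((s.card + degY k : ℕ) : ℚ)⁻¹ * (koszulSign s A : ℚ)) • r)) :=
  Finsupp.sum_single_index (by simp)

lemma delta_deltaStar_single [Algebra ℚ R] (k : Fin n →₀ ℕ) (s : Finset (Fin n)) (r : R) :
    delta (deltaStar (single (k, s) r)) =
      ∑ A ∈ s, (single (k, s) ((((k A : ℚ) + 1) * ((s.card + degY k : ℕ) : ℚ)⁻¹) • r) +
        ∑ B ∈ sᶜ, single (k + single A 1 - single B 1, insert B (s.erase A))
          (((k B : ℚ) * ((s.card + degY k : ℕ) : ℚ)⁻¹ *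
            (koszulSign (s.erase A) B * koszulSign s A : ℤ)) • r)) := by
  rw [deltaStar_single, delta_sum]
  refine Finset.sum_congr rfl fun A hA => ?_
  rw [delta_single, Finset.compl_erase, Finset.sum_insert (by simp [hA])]
  congr 1
  · rw [add_tsub_cancel_right, Finset.insert_erase hA,
      koszulSign_erase_of_not_lt s (lt_irrefl A), ← Int.cast_smul_eq_zsmul ℚ, smul_smul]
    congr 2
    have hsq : (koszulSign s A : ℚ) * koszulSign s A = 1 := by
      exact_mod_cast koszulSign_mul_self s A
    simp only [Finsupp.add_apply, single_eq_same]
    push_cast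
    linear_combination (((k A : ℚ) + 1) * ((s.card : ℚ) + degY k)⁻¹) * hsq
  · refine Finset.sum_congr rfl fun B hB => ?_
    have hBA : A ≠ B := by rintro rfl; exact Finset.mem_compl.mp hB hA
    rw [← Int.cast_smul_eq_zsmul ℚ, smul_smul]
    congr 2
    simp only [Finsupp.add_apply, single_eq_of_ne' hBA, add_zero]
    push_cast
    ring

lemma deltaStar_delta_single [Algebra ℚ R] (k : Fin n →₀ ℕ) (s : Finset (Fin n)) (r : R) :
    deltaStar (delta (single (k, s) r)) =
      ∑ B ∈ sᶜ, (single (k, s) (((k B : ℚ) * ((s.card + degY k : ℕ) : ℚ)⁻¹) • r) +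
        ∑ A ∈ s, single (k + single A 1 - single B 1, insert B (s.erase A))
          (((k B : ℚ) * ((s.card + degY k : ℕ) : ℚ)⁻¹ *
            (koszulSign (insert B s) A * koszulSign s B : ℤ)) • r)) := by
  rw [delta_single, deltaStar_sum]
  refine Finset.sum_congr rfl fun B hB => ?_
  have hB' : B ∉ s := Finset.mem_compl.mp hB
  have hN := natCast_mul_inv_card_insert_add_degY_sub_single (k := k) hB'
  rw [deltaStar_single, Finset.sum_insert hB']
  congr 1
  · by_cases hk : k B = 0
    · simp [hk]
    rw [tsub_add_cancel_of_le (single_le_iff.mpr (Nat.one_le_iff_ne_zero.mpr hk)),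
      Finset.erase_insert hB', koszulSign_insert_of_not_lt s (lt_irrefl B),
      ← Int.cast_smul_eq_zsmul ℚ, smul_smul]
    congr 2
    have hsq : (koszulSign s B : ℚ) * koszulSign s B = 1 := by
      exact_mod_cast koszulSign_mul_self s B
    push_cast at hN ⊢
    linear_combination
      (koszulSign s B : ℚ) ^ 2 * hN + ((k B : ℚ) * ((s.card : ℚ) + degY k)⁻¹) * hsq
  · refine Finset.sum_congr rfl fun A hA => ?_
    have hAB : A ≠ B := by rintro rfl; exact hB' hA
    rw [Finset.erase_insert_of_ne hAB.symm, ← add_single_tsub_single_of_ne k hAB,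
      ← Int.cast_smul_eq_zsmul ℚ, smul_smul]
    congr 2
    push_cast at hN ⊢
    linear_combination (koszulSign (insert B s) A * koszulSign s B : ℚ) * hN

lemma sum_add_one_add_sum_compl_eq_card_add_degY (k : Fin n →₀ ℕ) (s : Finset (Fin n)) :
    ∑ A ∈ s, ((k A : ℚ) + 1) + ∑ A ∈ sᶜ, (k A : ℚ) = ((s.card + degY k : ℕ) : ℚ) := by
  rw [Finset.sum_add_distrib, Finset.sum_const, nsmul_one, add_right_comm,
    Finset.sum_add_sum_compl, degY_eq_degree, Finsupp.degree_eq_sum]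
  push_cast
  ring

lemma delta_deltaStar_add_deltaStar_delta_add_piZero_single [Algebra ℚ R] (k : Fin n →₀ ℕ)
    (s : Finset (Fin n)) (r : R) :
    delta (deltaStar (single (k, s) r)) + deltaStar (delta (single (k, s) r)) +
      piZero (single (k, s) r) = single (k, s) r := by
  by_cases hN : s.card + degY k = 0
  · obtain ⟨rfl, rfl⟩ : s = ∅ ∧ k = 0 :=
      ⟨Finset.card_eq_zero.mp (by omega), eq_zero_of_degY_eq_zero (by omega)⟩
    simp [delta_deltaStar_single, deltaStar_delta_single, piZero]
  have hπ : piZero (single (k, s) r) = 0 :=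
    piZero_eq_zero (single_eq_of_ne' fun h => by simp_all [degY])
  have hdiag : ∑ A ∈ s, single (k, s) ((((k A : ℚ) + 1) * ((s.card + degY k : ℕ) : ℚ)⁻¹) • r) +
      ∑ A ∈ sᶜ, single (k, s) (((k A : ℚ) * ((s.card + degY k : ℕ) : ℚ)⁻¹) • r) =
      single (k, s) r := by
    rw [← single_finsetSum, ← single_finsetSum, ← single_add, ← Finset.sum_smul,
      ← Finset.sum_smul, ← add_smul, ← Finset.sum_mul, ← Finset.sum_mul, ← add_mul,
      sum_add_one_add_sum_compl_eq_card_add_degY, mul_inv_cancel₀ (Nat.cast_ne_zero.mpr hN),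
      one_smul]
  have hcross : ∀ A ∈ s, ∀ B ∈ sᶜ,
      single (k + single A 1 - single B 1, insert B (s.erase A))
          (((k B : ℚ) * ((s.card + degY k : ℕ) : ℚ)⁻¹ *
            (koszulSign (s.erase A) B * koszulSign s A : ℤ)) • r) +
        single (k + single A 1 - single B 1, insert B (s.erase A))
          (((k B : ℚ) * ((s.card + degY k : ℕ) : ℚ)⁻¹ *
            (koszulSign (insert B s) A * koszulSign s B : ℤ)) • r) = 0 := by
    intro A hA B hB
    rw [← single_add, ← add_smul, ← mul_add, ← Int.cast_add,
      koszulSign_erase_mul_koszulSign hA (Finset.mem_compl.mp hB), neg_add_cancel,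
      Int.cast_zero, mul_zero, zero_smul, single_zero]
  rw [delta_deltaStar_single, deltaStar_delta_single, hπ, add_zero, Finset.sum_add_distrib,
    Finset.sum_add_distrib, add_add_add_comm, hdiag, Finset.sum_comm (s := sᶜ),
    ← Finset.sum_add_distrib, Finset.sum_eq_zero fun A hA => ?_, add_zero]
  rw [← Finset.sum_add_distrib]
  exact Finset.sum_eq_zero fun B hB => hcross A hA B hB

lemma delta_deltaStar_add_deltaStar_delta_add_piZero [Algebra ℚ R] (f : FreeSCA n R) :
    delta (deltaStar f) + deltaStar (delta f) + piZero f = f := by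
  have h : deltaHom.comp deltaStarHom + deltaStarHom.comp deltaHom + piZeroHom =
      AddMonoidHom.id (FreeSCA n R) :=
    addHom_ext fun ⟨k, s⟩ r => delta_deltaStar_add_deltaStar_delta_add_piZero_single k s r
  exact DFunLike.congr_fun h f

/-- If δB = 0 and B has vanishing (0,0)-component, then x := δ*B solves δx = B,
and it is the unique solution with δ*x = 0 and vanishing (0,0)-component. -/
theorem delta_equation_solution [Algebra ℚ R] (B : FreeSCA n R)
    (hB : delta B = 0) (hB0 : B (0, ∅) = 0) :
    delta (deltaStar B) = B ∧
      ∀ x : FreeSCA n R, delta x = B → deltaStar x = 0 → x (0, ∅) = 0 →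
        x = deltaStar B := by
  have hB_eq := delta_deltaStar_add_deltaStar_delta_add_piZero B
  rw [hB, deltaStar_zero, piZero_eq_zero hB0, add_zero, add_zero] at hB_eq
  refine ⟨hB_eq, fun x hx hx' hx0 => ?_⟩
  have hx_eq := delta_deltaStar_add_deltaStar_delta_add_piZero x
  rw [hx', delta_zero, hx, piZero_eq_zero hx0, zero_add, add_zero] at hx_eq
  exact hx_eq.symm
end
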